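/- arXiv:2207.02546 — 4 statements merged into one kernel-verified Lean document; each statement's English description precedes it below -/
import Mathlib

section
/- Let $\{d_i\}_{i=1}^n$ be a sequence of random variables adapted to an increasing sequence of $\sigma$-fields $\{\mathcal{F}_i\}$ such that each $d_i$ is conditionally symmetric given $\mathcal{F}_{i-1}$ (i.e., the conditional law of $d_i$ given $\mathcal{F}_{i-1}$ equals that of $-d_i$). Then for every $\lambda \in \mathbb{R}$, the process $M_n = \exp(\lambda \sum_{i=1}^n d_i - \frac{\lambda^2}{2} \sum_{i=1}^n d_i^2)$, $n \geq 1$, is a supermartingale with $\mathrm{E}[M_n] \leq 1$. -/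
open MeasureTheory Real Finset

/-! With `φ x = exp (λ x - λ² x² / 2)` the process is the product `∏ φ (d i)`. Conditional
symmetry lets one replace `E[φ (d (n+1)) | ℱ n]` by the conditional expectation of the
symmetrisation `(φ x + φ (-x)) / 2 = cosh (λ x) exp (-λ² x² / 2)`, which is at most `1` because
`cosh y ≤ exp (y² / 2)`. So every factor has conditional mean at most `1`, and a product of
nonnegative bounded factors with this property is a supermartingale starting at `1`. -/

lemma mul_sub_sq_le_half (lam x : ℝ) : lam * x - lam ^ 2 / 2 * x ^ 2 ≤ 1 / 2 := by
  nlinarith [sq_nonneg (lam * x - 1)]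

lemma exp_mul_sub_sq_add_exp_neg_le_two (lam x : ℝ) :
    exp (lam * x - lam ^ 2 / 2 * x ^ 2) + exp (lam * -x - lam ^ 2 / 2 * (-x) ^ 2) ≤ 2 := by
  have hsplit : exp (lam * x - lam ^ 2 / 2 * x ^ 2) + exp (lam * -x - lam ^ 2 / 2 * (-x) ^ 2)
      = 2 * cosh (lam * x) * exp (-((lam * x) ^ 2 / 2)) := by
    rw [cosh_eq, sub_eq_add_neg, sub_eq_add_neg, exp_add, exp_add]
    ring_nf
  calc _ = 2 * cosh (lam * x) * exp (-((lam * x) ^ 2 / 2)) := hsplit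
    _ ≤ 2 * exp ((lam * x) ^ 2 / 2) * exp (-((lam * x) ^ 2 / 2)) := by
      gcongr
      exact cosh_le_exp_half_sq _
    _ = 2 := by rw [mul_assoc, ← exp_add, add_neg_cancel, exp_zero, mul_one]

section CondSymmetric

variable {Ω : Type*} {m m0 : MeasurableSpace Ω} {μ : Measure Ω} {d : Ω → ℝ}

lemma condExp_comp_ae_eq_comp_neg_of_abs_le
    (hsym : ∀ g : ℝ → ℝ, Measurable g → (∀ x, |g x| ≤ 1) →
      μ[(fun ω => g (d ω)) | m] =ᵐ[μ] μ[(fun ω => g (-d ω)) | m])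
    {g : ℝ → ℝ} (hg : Measurable g) {C : ℝ} (hC : ∀ x, |g x| ≤ C) :
    μ[(fun ω => g (d ω)) | m] =ᵐ[μ] μ[(fun ω => g (-d ω)) | m] := by
  set c := max C 1
  have hc : 0 < c := zero_lt_one.trans_le (le_max_right C 1)
  have hscaled := hsym (fun x => c⁻¹ * g x) (hg.const_mul _) fun x => by
    rw [abs_mul, abs_inv, abs_of_pos hc, inv_mul_le_one₀ hc]
    exact (hC x).trans (le_max_left C 1)
  have hunscale : ∀ s : Ω → ℝ,
      μ[(fun ω => g (s ω)) | m] =ᵐ[μ] c • μ[(fun ω => c⁻¹ * g (s ω)) | m] := fun s => by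
    have hfun : (fun ω => g (s ω)) = c • fun ω => c⁻¹ * g (s ω) := by
      funext ω
      simp [hc.ne']
    rw [hfun]
    exact condExp_smul c _ m
  exact (hunscale d).trans ((hscaled.const_smul c).trans
    (hunscale (fun ω => -d ω) :).symm)

lemma condExp_comp_le_of_add_neg_le [IsFiniteMeasure μ] (hm : m ≤ m0) (hd : AEMeasurable d μ)
    {g : ℝ → ℝ} (hg : Measurable g) {C : ℝ} (hC : ∀ x, |g x| ≤ C) {c : ℝ}
    (hgc : ∀ x, g x + g (-x) ≤ 2 * c)
    (hsym : μ[(fun ω => g (d ω)) | m] =ᵐ[μ] μ[(fun ω => g (-d ω)) | m]) :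
    μ[(fun ω => g (d ω)) | m] ≤ᵐ[μ] fun _ => c := by
  have hint : ∀ s : Ω → ℝ, AEMeasurable s μ → Integrable (fun ω => g (s ω)) μ := fun s hs =>
    .of_bound (hg.comp_aemeasurable hs).aestronglyMeasurable C (ae_of_all _ fun ω => hC (s ω))
  have hint_d := hint d hd
  have hint_neg := hint (fun ω => -d ω) hd.neg
  have hsum : μ[(fun ω => g (d ω)) + (fun ω => g (-d ω)) | m] ≤ᵐ[μ] fun _ => 2 * c := by
    rw [← condExp_const (μ := μ) hm (2 * c)]
    exact condExp_mono (hint_d.add hint_neg) (integrable_const _) (ae_of_all _ fun ω => hgc _)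
  filter_upwards [condExp_add hint_d hint_neg m, hsym, hsum] with ω hadd hsymω hle
  rw [hadd, Pi.add_apply, ← hsymω] at hle
  linarith

end CondSymmetric

section Supermartingale

variable {Ω : Type*} {m0 : MeasurableSpace Ω} {μ : Measure Ω} [IsFiniteMeasure μ]
  {ℱ : Filtration ℕ m0}

theorem supermartingale_prod_of_condExp_le_one {Y : ℕ → Ω → ℝ} {C : ℝ} (hY : Adapted ℱ Y)
    (hY_nonneg : ∀ n ω, 0 ≤ Y n ω) (hY_le : ∀ n ω, Y n ω ≤ C)
    (hcond : ∀ n, μ[Y (n + 1) | ℱ n] ≤ᵐ[μ] 1) :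
    Supermartingale (fun n ω => ∏ i ∈ range n, Y (i + 1) ω) ℱ μ := by
  set M : ℕ → Ω → ℝ := fun n ω => ∏ i ∈ range n, Y (i + 1) ω
  have hM_nonneg : ∀ n ω, 0 ≤ M n ω := fun n ω => prod_nonneg fun i _ => hY_nonneg _ ω
  have hM_le : ∀ n ω, |M n ω| ≤ C ^ n := fun n ω => by
    rw [abs_of_nonneg (hM_nonneg n ω)]
    exact (prod_le_prod (fun i _ => hY_nonneg _ ω) fun i _ => hY_le _ ω).trans_eq (by simp)
  have hM_adapted : StronglyAdapted ℱ M := fun n =>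
    (measurable_prod _ fun i hi => (hY (i + 1)).mono (ℱ.mono (mem_range.1 hi)) le_rfl
      ).stronglyMeasurable
  have hM_int : ∀ n, Integrable (M n) μ := fun n =>
    .of_bound ((hM_adapted n).mono (ℱ.le n)).aestronglyMeasurable (C ^ n)
      (ae_of_all _ (hM_le n))
  have hY_int : ∀ n, Integrable (Y n) μ := fun n =>
    .of_bound ((hY n).mono (ℱ.le n) le_rfl).aestronglyMeasurable C
      (ae_of_all _ fun ω => (abs_of_nonneg (hY_nonneg n ω)).trans_le (hY_le n ω))
  refine supermartingale_nat hM_adapted hM_int fun n => ?_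
  have hsucc : M (n + 1) = M n * Y (n + 1) := funext fun ω => prod_range_succ _ n
  rw [hsucc]
  filter_upwards [condExp_mul_of_stronglyMeasurable_left (hM_adapted n) (hsucc ▸ hM_int (n + 1))
    (hY_int (n + 1)), hcond n] with ω hpull hle
  rw [hpull]
  exact mul_le_of_le_one_right (hM_nonneg n ω) hle

lemma MeasureTheory.Supermartingale.integral_le_of_le {f : ℕ → Ω → ℝ}
    (hf : Supermartingale f ℱ μ) {i j : ℕ} (hij : i ≤ j) : ∫ ω, f j ω ∂μ ≤ ∫ ω, f i ω ∂μ := by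
  simpa using hf.setIntegral_le hij MeasurableSet.univ

end Supermartingale

/-- If `{dseq i}` is adapted and each `dseq (i+1)` is conditionally symmetric given `ℱ i`,
then `exp (λ ∑_{i=1}^n dseq i - λ²/2 ∑_{i=1}^n (dseq i)²)` is a supermartingale with
expectation at most 1. -/
theorem cond_symmetric_exp_supermartingale
    {Ω : Type*} {m0 : MeasurableSpace Ω} (μ : Measure Ω) [IsProbabilityMeasure μ]
    (ℱ : Filtration ℕ m0) (dseq : ℕ → Ω → ℝ)
    (hadp : Adapted ℱ dseq)
    (hsym : ∀ i : ℕ, ∀ g : ℝ → ℝ, Measurable g → (∀ x, |g x| ≤ 1) →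
      μ[(fun ω => g (dseq (i + 1) ω)) | ℱ i]
        =ᵐ[μ] μ[(fun ω => g (-(dseq (i + 1) ω))) | ℱ i])
    (lam : ℝ) :
    Supermartingale
      (fun n ω => Real.exp (lam * ∑ i ∈ Finset.range n, dseq (i + 1) ω
        - lam ^ 2 / 2 * ∑ i ∈ Finset.range n, (dseq (i + 1) ω) ^ 2)) ℱ μ
    ∧ ∀ n : ℕ,
      ∫ ω, Real.exp (lam * ∑ i ∈ Finset.range n, dseq (i + 1) ω
        - lam ^ 2 / 2 * ∑ i ∈ Finset.range n, (dseq (i + 1) ω) ^ 2) ∂μ ≤ 1 := by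
  set φ : ℝ → ℝ := fun x => exp (lam * x - lam ^ 2 / 2 * x ^ 2)
  have hφ_meas : Measurable φ := by fun_prop
  have hφ_le : ∀ x, |φ x| ≤ exp (1 / 2) := fun x => by
    rw [abs_of_pos (exp_pos _)]
    exact exp_le_exp.2 (mul_sub_sq_le_half lam x)
  have hprod : ∀ n ω, exp (lam * ∑ i ∈ range n, dseq (i + 1) ω
      - lam ^ 2 / 2 * ∑ i ∈ range n, (dseq (i + 1) ω) ^ 2)
      = ∏ i ∈ range n, φ (dseq (i + 1) ω) := fun n ω => by
    rw [← exp_sum, mul_sum, mul_sum, sum_sub_distrib]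
  have hcond : ∀ n, μ[fun ω => φ (dseq (n + 1) ω) | ℱ n] ≤ᵐ[μ] 1 := fun n =>
    condExp_comp_le_of_add_neg_le (ℱ.le n) ((hadp (n + 1)).mono (ℱ.le _) le_rfl).aemeasurable
      hφ_meas hφ_le (fun x => (exp_mul_sub_sq_add_exp_neg_le_two lam x).trans_eq (mul_one 2).symm)
      (condExp_comp_ae_eq_comp_neg_of_abs_le (hsym n) hφ_meas hφ_le)
  have hsuper := supermartingale_prod_of_condExp_le_one (Y := fun n ω => φ (dseq n ω))
    (fun n => hφ_meas.comp (hadp n)) (fun n ω => (exp_pos _).le)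
    (fun n ω => (le_abs_self _).trans (hφ_le _)) hcond
  simp only [hprod]
  refine ⟨hsuper, fun n => ?_⟩
  simpa using hsuper.integral_le_of_le n.zero_le
end

section
/- Let $X_1, \ldots, X_n$ be independent real random variables with $\mathrm{E}[X_i] = 0$, $|X_i| \leq M$ almost surely, and $\sum_{i=1}^n \mathrm{Var}(X_i) \leq V$. Suppose $\gamma = (1 + \sqrt{37})/3$ and $\alpha = \gamma \sqrt{c}$ where $c > 0$ satisfies $V \leq 2c$ and $M \leq \sqrt{c / \log N}$ for some $N \geq e^{10}$. Then for all $x \geq \alpha \sqrt{\log N}$, $\Pr\left(\left|\sum_{i=1}^n X_i\right| \geq x\right) \leq 2 \exp\left(-\frac{\log N}{\alpha \sqrt{\log N}} x\right)$. -/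
open MeasureTheory ProbabilityTheory Real Finset

/-!
For `y ≤ m < 3` one has `exp y ≤ 1 + y + y ^ 2 / (2 * (1 - m / 3))`, so a centered variable
bounded by `M` satisfies `mgf X t ≤ exp (t ^ 2 Var X / (2 * (1 - t M / 3)))`. Multiplying these
over independent summands and applying Chernoff's bound at `t = x / (V + M x / 3)` gives
Bernstein's inequality `P(|∑ Xᵢ| ≥ x) ≤ 2 exp (-(x ^ 2 / 2) / (V + M x / 3))`. With `V = 2c`,
`M √(log N) ≤ √c` and `x ≥ γ √(c log N)`, the exponent dominates `x √(log N) / (γ √c)` exactly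
because `(γ - 2/3) γ = 4`, i.e. `3γ² - 2γ - 12 = 0`.
-/

lemma Real.one_add_sub_one_mul_exp_nonneg (y : ℝ) : 0 ≤ 1 + (y - 1) * exp y := by
  have h : (1 - y) * exp y ≤ 1 :=
    calc (1 - y) * exp y ≤ exp (-y) * exp y := by
          gcongr; linarith [add_one_le_exp (-y)]
      _ = 1 := by rw [← exp_add, neg_add_cancel, exp_zero]
  linarith

lemma Real.monotone_add_two_add_sub_two_mul_exp :
    Monotone fun y : ℝ ↦ y + 2 + (y - 2) * exp y := by
  refine monotone_of_hasDerivAt_nonneg (f' := fun y ↦ 1 + (y - 1) * exp y) (fun y ↦ ?_)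
    fun y ↦ one_add_sub_one_mul_exp_nonneg y
  exact (((hasDerivAt_id' y).add_const 2).add (((hasDerivAt_id' y).sub_const 2).mul
    (hasDerivAt_exp y))).congr_deriv (by ring)

lemma Real.exp_sub_one_sub_mul_one_sub_div_three_le (y : ℝ) :
    (exp y - 1 - y) * (1 - y / 3) ≤ y ^ 2 / 2 := by
  set G : ℝ → ℝ := fun y ↦ y + 2 + (y - 2) * exp y
  set F : ℝ → ℝ := fun y ↦ y ^ 2 / 2 - (exp y - 1 - y) * (1 - y / 3)
  have hG0 : G 0 = 0 := by norm_num [G]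
  -- `G` has the sign of its argument, so `F' = G / 3` makes `F` minimal at `0`.
  have hF' : ∀ z, HasDerivAt F (G z / 3) z := fun z ↦
    ((((hasDerivAt_id' z).pow 2).div_const 2).sub ((((hasDerivAt_exp z).sub_const 1).sub
      (hasDerivAt_id' z)).mul (((hasDerivAt_id' z).div_const 3).const_sub 1))).congr_deriv
      (by simp only [G, Pi.sub_apply]; ring)
  have hF0 : F 0 = 0 := by norm_num [F]
  have hFcont : Continuous F := by fun_prop
  suffices 0 ≤ F y by simp only [F] at this; linarith
  rcases le_total 0 y with hy | hy
  · refine hF0 ▸ monotoneOn_of_hasDerivWithinAt_nonneg (convex_Ici 0) hFcont.continuousOn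
      (fun z _ ↦ (hF' z).hasDerivWithinAt) (fun z hz ↦ ?_) Set.self_mem_Ici hy hy
    rw [interior_Ici] at hz
    have := monotone_add_two_add_sub_two_mul_exp hz.le
    change G 0 ≤ G z at this
    linarith
  · refine hF0 ▸ antitoneOn_of_hasDerivWithinAt_nonpos (convex_Iic 0) hFcont.continuousOn
      (fun z _ ↦ (hF' z).hasDerivWithinAt) (fun z hz ↦ ?_) hy Set.self_mem_Iic hy
    rw [interior_Iic] at hz
    have := monotone_add_two_add_sub_two_mul_exp hz.le
    change G z ≤ G 0 at this
    linarith

lemma Real.exp_le_one_add_add_sq_div {y m : ℝ} (hym : y ≤ m) (hm : m < 3) :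
    exp y ≤ 1 + y + y ^ 2 / (2 * (1 - m / 3)) := by
  have h := exp_sub_one_sub_mul_one_sub_div_three_le y
  have hrem : exp y - 1 - y ≤ y ^ 2 / (2 * (1 - m / 3)) := by
    rw [le_div_iff₀ (by linarith)]
    nlinarith [add_one_le_exp y]
  linarith

section Bernstein

variable {Ω : Type*} [MeasurableSpace Ω] {μ : Measure Ω} [IsProbabilityMeasure μ]

lemma ProbabilityTheory.mgf_le_exp_of_abs_le {X : Ω → ℝ} (hX : AEMeasurable X μ)
    (hmean : μ[X] = 0) {M t : ℝ} (hbdd : ∀ᵐ ω ∂μ, |X ω| ≤ M) (ht : 0 ≤ t) (htM : t * M < 3) :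
    mgf X μ t ≤ exp (t ^ 2 * variance X μ / (2 * (1 - t * M / 3))) := by
  set K := 2 * (1 - t * M / 3)
  have hL2 : MemLp X 2 μ := .of_bound hX.aestronglyMeasurable M (by simpa using hbdd)
  have hlin : Integrable (fun ω ↦ 1 + t * X ω) μ :=
    (integrable_const 1).add ((hL2.integrable one_le_two).const_mul t)
  have hsq : Integrable (fun ω ↦ t ^ 2 / K * X ω ^ 2) μ := hL2.integrable_sq.const_mul _
  calc mgf X μ t ≤ ∫ ω, (1 + t * X ω + t ^ 2 / K * X ω ^ 2) ∂μ := by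
        refine integral_mono_ae
          (integrable_exp_mul_of_le t M ht hX (hbdd.mono fun _ ↦ le_of_abs_le)) (hlin.add hsq) ?_
        filter_upwards [hbdd] with ω hω
        refine (exp_le_one_add_add_sq_div (m := t * M) ?_ htM).trans_eq (by ring)
        exact mul_le_mul_of_nonneg_left (le_of_abs_le hω) ht
    _ = 1 + t ^ 2 * variance X μ / K := by
        rw [integral_add hlin hsq, integral_add (integrable_const 1)
          ((hL2.integrable one_le_two).const_mul t), integral_const_mul, integral_const_mul,
          ← variance_of_integral_eq_zero hX hmean]
        simp [hmean, mul_div_right_comm]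
    _ ≤ _ := by linarith [add_one_le_exp (t ^ 2 * variance X μ / K)]

variable {ι : Type*} [Fintype ι] {X : ι → Ω → ℝ}

lemma ProbabilityTheory.iIndepFun.measureReal_sum_ge_le_exp (hindep : iIndepFun X μ)
    (hmeas : ∀ i, Measurable (X i)) (hmean : ∀ i, μ[X i] = 0) {M t : ℝ}
    (hbdd : ∀ i, ∀ᵐ ω ∂μ, |X i ω| ≤ M) (ht : 0 ≤ t) (htM : t * M < 3) (x : ℝ) :
    μ.real {ω | x ≤ ∑ i, X i ω} ≤
      exp (-t * x + t ^ 2 * (∑ i, variance (X i) μ) / (2 * (1 - t * M / 3))) := by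
  have hchernoff := measure_ge_le_exp_mul_mgf x ht (hindep.integrable_exp_mul_sum hmeas
    (s := univ) fun i _ ↦ integrable_exp_mul_of_le t M ht (hmeas i).aemeasurable
      ((hbdd i).mono fun _ ↦ le_of_abs_le))
  simp only [Finset.sum_apply] at hchernoff
  refine hchernoff.trans ?_
  rw [hindep.mgf_sum hmeas, exp_add, mul_sum, sum_div]
  gcongr
  rw [exp_sum]
  exact prod_le_prod (fun _ _ ↦ mgf_nonneg) fun i _ ↦
    mgf_le_exp_of_abs_le (hmeas i).aemeasurable (hmean i) (hbdd i) ht htM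

theorem ProbabilityTheory.iIndepFun.measureReal_sum_ge_le_bernstein (hindep : iIndepFun X μ)
    (hmeas : ∀ i, Measurable (X i)) (hmean : ∀ i, μ[X i] = 0) {M V x : ℝ}
    (hbdd : ∀ i, ∀ᵐ ω ∂μ, |X i ω| ≤ M) (hvar : ∑ i, variance (X i) μ ≤ V) (hM : 0 ≤ M)
    (hV : 0 < V) (hx : 0 ≤ x) :
    μ.real {ω | x ≤ ∑ i, X i ω} ≤ exp (-(x ^ 2 / 2) / (V + M * x / 3)) := by
  set D := V + M * x / 3 with hDdef
  have hD : 0 < D := by positivity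
  have htM : x / D * M < 3 := by
    rw [div_mul_eq_mul_div, div_lt_iff₀ hD]; linarith [hDdef]
  refine (hindep.measureReal_sum_ge_le_exp hmeas hmean hbdd (by positivity) htM x).trans ?_
  gcongr
  have hden : 1 - x / D * M / 3 = V / D := by field_simp; ring
  rw [hden]
  calc -(x / D) * x + (x / D) ^ 2 * (∑ i, variance (X i) μ) / (2 * (V / D))
      ≤ -(x / D) * x + (x / D) ^ 2 * V / (2 * (V / D)) := by gcongr
    _ = -(x ^ 2 / 2) / D := by field_simp; ring

theorem ProbabilityTheory.iIndepFun.measure_abs_sum_ge_le_bernstein (hindep : iIndepFun X μ)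
    (hmeas : ∀ i, Measurable (X i)) (hmean : ∀ i, μ[X i] = 0) {M V x : ℝ}
    (hbdd : ∀ i, ∀ᵐ ω ∂μ, |X i ω| ≤ M) (hvar : ∑ i, variance (X i) μ ≤ V) (hM : 0 ≤ M)
    (hV : 0 < V) (hx : 0 ≤ x) :
    μ {ω | x ≤ |∑ i, X i ω|} ≤ ENNReal.ofReal (2 * exp (-(x ^ 2 / 2) / (V + M * x / 3))) := by
  set B := exp (-(x ^ 2 / 2) / (V + M * x / 3))
  have hupper : μ.real {ω | x ≤ ∑ i, X i ω} ≤ B :=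
    hindep.measureReal_sum_ge_le_bernstein hmeas hmean hbdd hvar hM hV hx
  have hlower : μ.real {ω | x ≤ -∑ i, X i ω} ≤ B := by
    have hneg := hindep.comp (fun _ ↦ Neg.neg) fun _ ↦ measurable_neg
    have := hneg.measureReal_sum_ge_le_bernstein (fun i ↦ (hmeas i).neg)
      (fun i ↦ by simp [integral_neg, hmean i]) (fun i ↦ by simpa using hbdd i)
      (by simpa [Function.comp_def, variance_fun_neg] using hvar) hM hV hx
    simpa [sum_neg_distrib] using this
  calc μ {ω | x ≤ |∑ i, X i ω|}
      ≤ μ ({ω | x ≤ ∑ i, X i ω} ∪ {ω | x ≤ -∑ i, X i ω}) :=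
          measure_mono fun ω (hω : x ≤ |∑ i, X i ω|) ↦ le_abs.1 hω
    _ ≤ μ {ω | x ≤ ∑ i, X i ω} + μ {ω | x ≤ -∑ i, X i ω} := measure_union_le _ _
    _ = ENNReal.ofReal (μ.real {ω | x ≤ ∑ i, X i ω}) +
          ENNReal.ofReal (μ.real {ω | x ≤ -∑ i, X i ω}) := by
        rw [ofReal_measureReal, ofReal_measureReal]
    _ ≤ ENNReal.ofReal B + ENNReal.ofReal B := by gcongr
    _ = ENNReal.ofReal (2 * B) := by
        rw [← ENNReal.ofReal_add (by positivity) (by positivity), two_mul]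

end Bernstein

lemma mul_le_bernstein_exponent {γ c L M x : ℝ} (hγ : 3 * γ ^ 2 - 2 * γ - 12 = 0)
    (hγ0 : 0 < γ) (hc : 0 < c) (hL : 0 < L) (hM : 0 ≤ M) (hML : M ≤ √(c / L))
    (hx : γ * √c * √L ≤ x) :
    L / (γ * √c * √L) * x ≤ x ^ 2 / 2 / (2 * c + M * x / 3) := by
  set s := √c
  set r := √L
  have hs : 0 < s := sqrt_pos.2 hc
  have hr : 0 < r := sqrt_pos.2 hL
  have hss : s ^ 2 = c := sq_sqrt hc.le
  have hrr : r ^ 2 = L := sq_sqrt hL.le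
  have hx0 : 0 < x := lt_of_lt_of_le (by positivity) hx
  have hMr : M * r ≤ s := by
    rwa [sqrt_div hc.le, le_div_iff₀ hr] at hML
  have hsr : 4 * (s * r) ≤ (γ - 2 / 3) * x := by
    have hγ4 : (γ - 2 / 3) * γ = 4 := by linear_combination hγ / 3
    have hγ23 : 0 ≤ γ - 2 / 3 := by nlinarith
    nlinarith [mul_le_mul_of_nonneg_left hx hγ23]
  have hkey : 2 * r * (2 * c + M * x / 3) ≤ γ * s * x := by
    nlinarith [mul_le_mul_of_nonneg_left hsr hs.le, mul_le_mul_of_nonneg_right hMr hx0.le]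
  rw [← hrr, div_mul_eq_mul_div, div_div, div_le_div_iff₀ (by positivity) (by positivity)]
  nlinarith [mul_le_mul_of_nonneg_left hkey (by positivity : (0 : ℝ) ≤ r * x ^ 2)]

theorem bernstein_consequence_general
    {Ω : Type*} [MeasurableSpace Ω] (μ : Measure Ω) [IsProbabilityMeasure μ]
    (n : ℕ) (X : Fin n → Ω → ℝ)
    (hmeas : ∀ i, Measurable (X i))
    (hindep : iIndepFun X μ)
    (hmean : ∀ i, ∫ ω, X i ω ∂μ = 0)
    (M : ℝ) (hbdd : ∀ i, ∀ᵐ ω ∂μ, |X i ω| ≤ M)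
    (V : ℝ) (hvar : ∑ i, variance (X i) μ ≤ V)
    (γ α c N : ℝ) (hγ : γ = (1 + Real.sqrt 37) / 3) (hc : 0 < c)
    (hα : α = γ * Real.sqrt c)
    (hVc : V ≤ 2 * c) (hM : M ≤ Real.sqrt (c / Real.log N))
    (hN : Real.exp 10 ≤ N) :
    ∀ x : ℝ, α * Real.sqrt (Real.log N) ≤ x →
      μ {ω | x ≤ |∑ i, X i ω|}
        ≤ ENNReal.ofReal (2 * Real.exp (-(Real.log N / (α * Real.sqrt (Real.log N))) * x)) := by
  intro x hx
  subst hα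
  have hL : 0 < log N := by
    linarith [(le_log_iff_exp_le (lt_of_lt_of_le (exp_pos 10) hN)).2 hN]
  have hγ0 : 0 < γ := by rw [hγ]; positivity
  have hγeq : 3 * γ ^ 2 - 2 * γ - 12 = 0 := by
    rw [hγ]; linear_combination (1 / 3 : ℝ) * sq_sqrt (show (0 : ℝ) ≤ 37 by norm_num)
  -- `M` itself may be negative when `n = 0`.
  have hbdd' : ∀ i, ∀ᵐ ω ∂μ, |X i ω| ≤ max M 0 :=
    fun i ↦ (hbdd i).mono fun _ h ↦ h.trans (le_max_left M 0)
  refine (hindep.measure_abs_sum_ge_le_bernstein hmeas hmean hbdd' (hvar.trans hVc)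
    (le_max_right M 0) (by positivity) (le_trans (by positivity) hx)).trans ?_
  gcongr
  rw [neg_div, neg_mul, neg_le_neg_iff]
  exact mul_le_bernstein_exponent hγeq hγ0 hc hL (le_max_right M 0)
    (max_le hM (sqrt_nonneg _)) hx

/-- A consequence of Bernstein's inequality used to bound the maximum of self-normalized
block sums. -/
theorem bernstein_consequence
    {Ω : Type*} [MeasurableSpace Ω] (μ : Measure Ω) [IsProbabilityMeasure μ]
    (n : ℕ) (X : Fin n → Ω → ℝ)
    (hmeas : ∀ i, Measurable (X i))
    (hindep : iIndepFun X μ)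
    (hL2 : ∀ i, MemLp (X i) 2 μ)
    (hmean : ∀ i, ∫ ω, X i ω ∂μ = 0)
    (M : ℝ) (hbdd : ∀ i, ∀ᵐ ω ∂μ, |X i ω| ≤ M)
    (V : ℝ) (hvar : ∑ i, variance (X i) μ ≤ V)
    (γ α c N : ℝ) (hγ : γ = (1 + Real.sqrt 37) / 3) (hc : 0 < c)
    (hα : α = γ * Real.sqrt c)
    (hVc : V ≤ 2 * c) (hM : M ≤ Real.sqrt (c / Real.log N))
    (hN : Real.exp 10 ≤ N) :
    ∀ x : ℝ, α * Real.sqrt (Real.log N) ≤ x →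
      μ {ω | x ≤ |∑ i, X i ω|}
        ≤ ENNReal.ofReal (2 * Real.exp (-(Real.log N / (α * Real.sqrt (Real.log N))) * x)) :=
  bernstein_consequence_general μ n X hmeas hindep hmean M hbdd V hvar γ α c N hγ hc hα hVc hM hN
end

section
/- Let $B$ and $\xi$ be random variables with $B \geq 0$, $\mathrm{E}[B^2] > 0$, and suppose $\mathrm{E}\left[\frac{\sqrt{\mathrm{E}[B^2]}}{\sqrt{B^2 + \mathrm{E}[B^2]}} \exp(2\xi^2)\right] \leq N$ for some $N \geq 1$. Then $\mathrm{E}[\exp(\xi^2)] \leq 2^{1/4} \sqrt{N}$. -/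
/-!
With the weight `w = √m / √(B² + m)`, `m = E[B²]`, Cauchy–Schwarz gives
`E[exp ξ²]² ≤ E[w exp (2ξ²)] · E[1/w] ≤ N · E[1/w]`, and by Jensen
`E[1/w] = E[√((B² + m) / m)] ≤ √(E[(B² + m) / m]) = √2`.
-/

open MeasureTheory Real

lemma le_half_mul_mul_sq_add_inv_mul_inv {t w : ℝ} (ht : 0 < t) (hw : 0 < w) (u : ℝ) :
    u ≤ t / 2 * (w * u ^ 2) + (2 * t)⁻¹ * w⁻¹ := by
  have hgap : t / 2 * (w * u ^ 2) + (2 * t)⁻¹ * w⁻¹ - u = (t * w * u - 1) ^ 2 / (2 * t * w) := by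
    field_simp
    ring
  have : 0 ≤ (t * w * u - 1) ^ 2 / (2 * t * w) := by positivity
  linarith

lemma sqrt_le_add_div_two_mul_sqrt {c : ℝ} (hc : 0 < c) {y : ℝ} (hy : 0 ≤ y) :
    √y ≤ (y + c) / (2 * √c) := by
  rw [le_div_iff₀ (by positivity)]
  nlinarith [two_mul_le_add_sq (√y) (√c), sq_sqrt hy, sq_sqrt hc.le]

section

variable {Ω : Type*} [MeasurableSpace Ω] {μ : Measure Ω}

/-- Cauchy–Schwarz, proved through the pointwise bound above with the optimal `t`, so that `f` need
not be measurable (as `ENNReal.lintegral_mul_le_Lp_mul_Lq` would require). -/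
lemma lintegral_ofReal_le_sqrt_mul {w : Ω → ℝ} (hw : ∀ ω, 0 < w ω) (hw_meas : AEMeasurable w μ)
    {A C : ℝ} (hA : 0 < A) (hC : 0 < C) (f : Ω → ℝ)
    (hf : ∫⁻ ω, ENNReal.ofReal (w ω * f ω ^ 2) ∂μ ≤ ENNReal.ofReal A)
    (hw_inv : ∫⁻ ω, ENNReal.ofReal (w ω)⁻¹ ∂μ ≤ ENNReal.ofReal C) :
    ∫⁻ ω, ENNReal.ofReal (f ω) ∂μ ≤ ENNReal.ofReal (√(A * C)) := by
  set t := √C / √A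
  have ht : 0 < t := by positivity
  calc ∫⁻ ω, ENNReal.ofReal (f ω) ∂μ
      ≤ ∫⁻ ω, (ENNReal.ofReal (t / 2) * ENNReal.ofReal (w ω * f ω ^ 2)
          + ENNReal.ofReal (2 * t)⁻¹ * ENNReal.ofReal (w ω)⁻¹) ∂μ := by
        refine lintegral_mono fun ω => ?_
        rw [← ENNReal.ofReal_mul (by positivity), ← ENNReal.ofReal_mul (by positivity)]
        exact (ENNReal.ofReal_le_ofReal (le_half_mul_mul_sq_add_inv_mul_inv ht (hw ω) (f ω))).trans
          ENNReal.ofReal_add_le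
    _ = ENNReal.ofReal (t / 2) * ∫⁻ ω, ENNReal.ofReal (w ω * f ω ^ 2) ∂μ
          + ENNReal.ofReal (2 * t)⁻¹ * ∫⁻ ω, ENNReal.ofReal (w ω)⁻¹ ∂μ := by
        rw [lintegral_add_right' _ (by fun_prop), lintegral_const_mul' _ _ ENNReal.ofReal_ne_top,
          lintegral_const_mul' _ _ ENNReal.ofReal_ne_top]
    _ ≤ ENNReal.ofReal (t / 2) * ENNReal.ofReal A
          + ENNReal.ofReal (2 * t)⁻¹ * ENNReal.ofReal C := by
        gcongr
    _ = ENNReal.ofReal (√(A * C)) := by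
        rw [← ENNReal.ofReal_mul (by positivity), ← ENNReal.ofReal_mul (by positivity),
          ← ENNReal.ofReal_add (by positivity) (by positivity)]
        congr 1
        have hA_sq := sq_sqrt hA.le
        have hC_sq := sq_sqrt hC.le
        rw [sqrt_mul hA.le]
        simp only [t]
        field_simp
        rw [hA_sq, hC_sq]
        ring

lemma lintegral_ofReal_sqrt_le_sqrt_integral [IsProbabilityMeasure μ] {Y : Ω → ℝ}
    (hY : Integrable Y μ) (hY_nonneg : ∀ ω, 0 ≤ Y ω) (hpos : 0 < ∫ ω, Y ω ∂μ) :
    ∫⁻ ω, ENNReal.ofReal (√(Y ω)) ∂μ ≤ ENNReal.ofReal (√(∫ ω, Y ω ∂μ)) := by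
  set c := ∫ ω, Y ω ∂μ
  have htangent : Integrable (fun ω => (Y ω + c) / (2 * √c)) μ :=
    (hY.add (integrable_const c)).div_const _
  calc ∫⁻ ω, ENNReal.ofReal (√(Y ω)) ∂μ
      ≤ ∫⁻ ω, ENNReal.ofReal ((Y ω + c) / (2 * √c)) ∂μ :=
        lintegral_mono fun ω => ENNReal.ofReal_le_ofReal
          (sqrt_le_add_div_two_mul_sqrt hpos (hY_nonneg ω))
    _ = ENNReal.ofReal (∫ ω, (Y ω + c) / (2 * √c) ∂μ) :=
        (ofReal_integral_eq_lintegral_ofReal htangent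
          (Filter.Eventually.of_forall fun ω => by have := hY_nonneg ω; positivity)).symm
    _ = ENNReal.ofReal (√c) := by
        rw [integral_div, integral_add hY (integrable_const c), integral_const]
        congr 1
        simp only [probReal_univ, one_smul]
        have := sq_sqrt hpos.le
        field_simp
        linarith

end

lemma sqrt_sqrt_two : √(√2) = (2 : ℝ) ^ ((1 : ℝ) / 4) := by
  rw [sqrt_eq_rpow, sqrt_eq_rpow, ← rpow_mul (by norm_num)]
  norm_num

theorem weighted_exp_moment_to_exp_moment_general
    {Ω : Type*} [MeasurableSpace Ω] (μ : Measure Ω) [IsProbabilityMeasure μ]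
    (B ξ : Ω → ℝ)
    (hB2 : Integrable (fun ω => (B ω) ^ 2) μ)
    (hpos : 0 < ∫ ω, (B ω) ^ 2 ∂μ)
    (N : ℝ) (hN : 1 ≤ N)
    (h : ∫⁻ ω, ENNReal.ofReal
        (Real.sqrt (∫ ω', (B ω') ^ 2 ∂μ)
          / Real.sqrt ((B ω) ^ 2 + ∫ ω', (B ω') ^ 2 ∂μ)
          * Real.exp (2 * (ξ ω) ^ 2)) ∂μ ≤ ENNReal.ofReal N) :
    ∫⁻ ω, ENNReal.ofReal (Real.exp ((ξ ω) ^ 2)) ∂μ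
      ≤ ENNReal.ofReal ((2 : ℝ) ^ ((1 : ℝ) / 4) * Real.sqrt N) := by
  set m := ∫ ω, B ω ^ 2 ∂μ
  have hY : Integrable (fun ω => (B ω ^ 2 + m) / m) μ := (hB2.add (integrable_const m)).div_const m
  have hY_mean : ∫ ω, (B ω ^ 2 + m) / m ∂μ = 2 := by
    rw [integral_div, integral_add hB2 (integrable_const m), integral_const]
    simp only [probReal_univ, one_smul]
    field_simp
    ring
  have hw_inv : ∫⁻ ω, ENNReal.ofReal (√m / √(B ω ^ 2 + m))⁻¹ ∂μ ≤ ENNReal.ofReal √2 := by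
    calc ∫⁻ ω, ENNReal.ofReal (√m / √(B ω ^ 2 + m))⁻¹ ∂μ
        = ∫⁻ ω, ENNReal.ofReal √((B ω ^ 2 + m) / m) ∂μ := by
          simp only [inv_div, sqrt_div' _ hpos.le]
      _ ≤ ENNReal.ofReal √2 := hY_mean ▸ lintegral_ofReal_sqrt_le_sqrt_integral hY
          (fun ω => by positivity) (by rw [hY_mean]; norm_num)
  have hf : ∫⁻ ω, ENNReal.ofReal (√m / √(B ω ^ 2 + m) * exp (ξ ω ^ 2) ^ 2) ∂μ
      ≤ ENNReal.ofReal N := by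
    simpa only [← exp_nat_mul, Nat.cast_ofNat] using h
  calc ∫⁻ ω, ENNReal.ofReal (exp (ξ ω ^ 2)) ∂μ ≤ ENNReal.ofReal √(N * √2) :=
        lintegral_ofReal_le_sqrt_mul (fun ω => by positivity)
          ((hB2.aemeasurable.add_const m).sqrt.const_div _) (by linarith) (by positivity)
          _ hf hw_inv
    _ = ENNReal.ofReal (2 ^ ((1 : ℝ) / 4) * √N) := by
        rw [sqrt_mul (by linarith), sqrt_sqrt_two, mul_comm]

/-- Cauchy–Schwarz step: from a weighted exponential moment bound for `exp (2 ξ²)`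
to a bound on `E[exp ξ²]`. -/
theorem weighted_exp_moment_to_exp_moment
    {Ω : Type*} [MeasurableSpace Ω] (μ : Measure Ω) [IsProbabilityMeasure μ]
    (B ξ : Ω → ℝ) (hBnn : ∀ ω, 0 ≤ B ω)
    (hB2 : Integrable (fun ω => (B ω) ^ 2) μ)
    (hpos : 0 < ∫ ω, (B ω) ^ 2 ∂μ)
    (N : ℝ) (hN : 1 ≤ N)
    (h : ∫⁻ ω, ENNReal.ofReal
        (Real.sqrt (∫ ω', (B ω') ^ 2 ∂μ)
          / Real.sqrt ((B ω) ^ 2 + ∫ ω', (B ω') ^ 2 ∂μ)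
          * Real.exp (2 * (ξ ω) ^ 2)) ∂μ ≤ ENNReal.ofReal N) :
    ∫⁻ ω, ENNReal.ofReal (Real.exp ((ξ ω) ^ 2)) ∂μ
      ≤ ENNReal.ofReal ((2 : ℝ) ^ ((1 : ℝ) / 4) * Real.sqrt N) :=
  weighted_exp_moment_to_exp_moment_general μ B ξ hB2 hpos N hN h
end

section
/- Let $\{d_i\}_{i=1}^n$ be a martingale difference sequence with respect to a filtration $\{\mathcal{F}_i\}$ with $\mathrm{E}[d_i^2] < \infty$ for all $i$. Then for all $\lambda \in \mathbb{R}$, $\mathrm{E}\left[\exp\left(\lambda \sum_{i=1}^{n} d_i - \frac{\lambda^2}{2}\left(\sum_{i=1}^{n} d_i^2 + \sum_{i=1}^{n} \mathrm{E}[d_i^2 \mid \mathcal{F}_{i-1}]\right)\right)\right] \leq 1$. -/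
/-!
Since `exp (x - x²/2) ≤ 1 + x + x²/2` and `E[dᵢ | ℱᵢ₋₁] = 0`,
`E[exp (λ dᵢ - λ²/2 dᵢ²) | ℱᵢ₋₁] ≤ 1 + λ²/2 E[dᵢ² | ℱᵢ₋₁] ≤ exp (λ²/2 E[dᵢ² | ℱᵢ₋₁])`.
Pulling the `ℱᵢ₋₁`-measurable factors out of the conditional expectation, this makes
`exp (∑_{i ≤ n} (λ dᵢ - λ²/2 (dᵢ² + E[dᵢ² | ℱᵢ₋₁])))` a supermartingale, whose expectation
is therefore at most its value `1` at `n = 0`. Each summand of the exponent is at most `1/2`, which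
gives the integrability.
-/

open MeasureTheory Finset

namespace Real

lemma exp_sub_sq_div_two_le (x : ℝ) : exp (x - x ^ 2 / 2) ≤ 1 + x + x ^ 2 / 2 := by
  have hy : 0 < 1 - (x - x ^ 2 / 2) := by nlinarith [sq_nonneg (x - 1)]
  refine le_of_mul_le_mul_right ?_ hy
  calc exp (x - x ^ 2 / 2) * (1 - (x - x ^ 2 / 2))
      ≤ exp (x - x ^ 2 / 2) * exp (-(x - x ^ 2 / 2)) := by
        gcongr; exact one_sub_le_exp_neg _
    _ = 1 := by rw [← exp_add, add_neg_cancel, exp_zero]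
    -- `(1 + x + x²/2)(1 - x + x²/2) = 1 + x⁴/4`
    _ ≤ (1 + x + x ^ 2 / 2) * (1 - (x - x ^ 2 / 2)) := by nlinarith [sq_nonneg (x ^ 2)]

end Real

open Real

section CondExp

variable {Ω : Type*} {m m0 : MeasurableSpace Ω} {μ : Measure Ω} [IsFiniteMeasure μ]
  {d : Ω → ℝ}

lemma integrable_exp_mul_sub_sq (hd : AEStronglyMeasurable d μ) (lam : ℝ) :
    Integrable (fun ω => exp (lam * d ω - lam ^ 2 / 2 * d ω ^ 2)) μ := by
  refine Integrable.mono' (integrable_const (exp (1 / 2)))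
    (continuous_exp.comp_aestronglyMeasurable ((hd.const_mul lam).sub
      ((hd.pow 2).const_mul _))) (ae_of_all _ fun ω => ?_)
  rw [norm_of_nonneg (exp_pos _).le, exp_le_exp]
  nlinarith [sq_nonneg (lam * d ω - 1)]

lemma condExp_exp_mul_sub_sq_le (hm : m ≤ m0) (hd : MemLp d 2 μ) (hd0 : μ[d | m] =ᵐ[μ] 0)
    (lam : ℝ) :
    μ[fun ω => exp (lam * d ω - lam ^ 2 / 2 * d ω ^ 2) | m]
      ≤ᵐ[μ] fun ω => exp (lam ^ 2 / 2 * μ[fun ω => d ω ^ 2 | m] ω) := by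
  have h1 : Integrable (fun _ => (1 : ℝ)) μ := integrable_const 1
  have hd1 : Integrable (lam • d) μ := (hd.integrable one_le_two).smul lam
  have hd2 : Integrable ((lam ^ 2 / 2) • fun ω => d ω ^ 2) μ := hd.integrable_sq.smul _
  have h_le_quadratic : (fun ω => exp (lam * d ω - lam ^ 2 / 2 * d ω ^ 2))
      ≤ (fun _ => 1) + lam • d + (lam ^ 2 / 2) • fun ω => d ω ^ 2 := fun ω => by
    simpa [mul_pow, mul_div_right_comm] using exp_sub_sq_div_two_le (lam * d ω)
  filter_upwards [condExp_mono (m := m) (integrable_exp_mul_sub_sq hd.1 lam)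
      ((h1.add hd1).add hd2) (ae_of_all _ h_le_quadratic),
    condExp_add (h1.add hd1) hd2 m, condExp_add h1 hd1 m, condExp_smul lam d m,
    condExp_smul (lam ^ 2 / 2) (fun ω => d ω ^ 2) m, hd0]
    with ω h_mono h_add h_add' h_smul h_smul' h0
  rw [h_add, Pi.add_apply, h_add', Pi.add_apply, h_smul, h_smul', condExp_const hm] at h_mono
  simp only [Pi.smul_apply, h0, Pi.zero_apply, smul_eq_mul, mul_zero, add_zero] at h_mono
  linarith [add_one_le_exp (lam ^ 2 / 2 * μ[fun ω => d ω ^ 2 | m] ω)]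

lemma condExp_exp_add_mul_sub_sq_add_condExp_le (hm : m ≤ m0) {Y : Ω → ℝ}
    (hY : StronglyMeasurable[m] Y) (hd : MemLp d 2 μ) (hd0 : μ[d | m] =ᵐ[μ] 0) (lam : ℝ)
    (hint : Integrable (fun ω => exp (Y ω + (lam * d ω
      - lam ^ 2 / 2 * (d ω ^ 2 + μ[fun ω => d ω ^ 2 | m] ω)))) μ) :
    μ[fun ω => exp (Y ω + (lam * d ω
        - lam ^ 2 / 2 * (d ω ^ 2 + μ[fun ω => d ω ^ 2 | m] ω))) | m]
      ≤ᵐ[μ] fun ω => exp (Y ω) := by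
  set c := μ[fun ω => d ω ^ 2 | m]
  set f := fun ω => exp (Y ω - lam ^ 2 / 2 * c ω)
  set g := fun ω => exp (lam * d ω - lam ^ 2 / 2 * d ω ^ 2)
  have hfg : (fun ω => exp (Y ω + (lam * d ω - lam ^ 2 / 2 * (d ω ^ 2 + c ω)))) = f * g := by
    funext ω
    rw [Pi.mul_apply, ← exp_add]
    ring_nf
  have hf : StronglyMeasurable[m] f :=
    continuous_exp.comp_stronglyMeasurable (hY.sub (stronglyMeasurable_condExp.const_mul _))
  rw [hfg] at hint ⊢
  filter_upwards [condExp_mul_of_stronglyMeasurable_left hf hint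
      (integrable_exp_mul_sub_sq hd.1 lam), condExp_exp_mul_sub_sq_le hm hd hd0 lam]
    with ω h_pull h_le
  calc μ[f * g | m] ω = f ω * μ[g | m] ω := h_pull
    _ ≤ f ω * exp (lam ^ 2 / 2 * c ω) := by gcongr
    _ = exp (Y ω) := by rw [← exp_add]; ring_nf

end CondExp

section SelfNormalized

variable {Ω : Type*} {m0 : MeasurableSpace Ω} {μ : Measure Ω} {ℱ : Filtration ℕ m0}
  {d : ℕ → Ω → ℝ}

noncomputable def selfNormalizedIncrement (μ : Measure Ω) (ℱ : Filtration ℕ m0)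
    (d : ℕ → Ω → ℝ) (lam : ℝ) (i : ℕ) (ω : Ω) : ℝ :=
  lam * d i ω - lam ^ 2 / 2 * (d i ω ^ 2 + μ[fun ω' => d i ω' ^ 2 | ℱ (i - 1)] ω)

lemma sum_selfNormalizedIncrement (s : Finset ℕ) (lam : ℝ) (ω : Ω) :
    ∑ i ∈ s, selfNormalizedIncrement μ ℱ d lam i ω = lam * ∑ i ∈ s, d i ω
      - lam ^ 2 / 2 * (∑ i ∈ s, d i ω ^ 2
        + ∑ i ∈ s, μ[fun ω' => d i ω' ^ 2 | ℱ (i - 1)] ω) := by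
  simp only [selfNormalizedIncrement, sum_sub_distrib, ← mul_sum, sum_add_distrib]

lemma selfNormalizedIncrement_le_half (lam : ℝ) (i : ℕ) :
    ∀ᵐ ω ∂μ, selfNormalizedIncrement μ ℱ d lam i ω ≤ 1 / 2 := by
  filter_upwards [condExp_nonneg (m := ℱ (i - 1)) (μ := μ)
    (ae_of_all _ fun ω => sq_nonneg (d i ω))] with ω hc
  unfold selfNormalizedIncrement
  nlinarith [sq_nonneg (lam * d i ω - 1),
    mul_nonneg (by positivity : (0 : ℝ) ≤ lam ^ 2 / 2) hc]

lemma measurable_sum_selfNormalizedIncrement (hadp : Adapted ℱ d) (lam : ℝ) (n : ℕ) :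
    Measurable[ℱ n] fun ω => ∑ i ∈ Icc 1 n, selfNormalizedIncrement μ ℱ d lam i ω := by
  refine Finset.measurable_fun_sum _ fun i hi => ?_
  have hin : i ≤ n := (mem_Icc.1 hi).2
  have hd : Measurable[ℱ n] (d i) := (hadp i).mono (ℱ.mono hin) le_rfl
  have hc : Measurable[ℱ n] (μ[fun ω' => d i ω' ^ 2 | ℱ (i - 1)]) :=
    stronglyMeasurable_condExp.measurable.mono (ℱ.mono (by omega)) le_rfl
  unfold selfNormalizedIncrement
  fun_prop

lemma supermartingale_exp_sum_selfNormalizedIncrement [IsFiniteMeasure μ]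
    (hadp : Adapted ℱ d) (hL2 : ∀ i, MemLp (d i) 2 μ)
    (hmds : ∀ n, μ[d (n + 1) | ℱ n] =ᵐ[μ] 0) (lam : ℝ) :
    Supermartingale
      (fun n ω => exp (∑ i ∈ Icc 1 n, selfNormalizedIncrement μ ℱ d lam i ω)) ℱ μ := by
  have hS := measurable_sum_selfNormalizedIncrement (μ := μ) hadp lam
  have hint : ∀ n, Integrable
      (fun ω => exp (∑ i ∈ Icc 1 n, selfNormalizedIncrement μ ℱ d lam i ω)) μ := by
    intro n
    refine Integrable.mono' (integrable_const (exp (#(Icc 1 n) • (1 / 2 : ℝ))))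
      (continuous_exp.measurable.comp ((hS n).mono (ℱ.le n) le_rfl)).aestronglyMeasurable ?_
    filter_upwards
      [ae_all_iff.2 (selfNormalizedIncrement_le_half (μ := μ) (ℱ := ℱ) (d := d) lam)] with ω hω
    rw [norm_of_nonneg (exp_pos _).le, exp_le_exp]
    exact sum_le_card_nsmul _ _ _ fun i _ => hω i
  refine supermartingale_nat
    (fun n => (continuous_exp.measurable.comp (hS n)).stronglyMeasurable) hint fun n => ?_
  have h_succ : (fun ω => exp (∑ i ∈ Icc 1 (n + 1), selfNormalizedIncrement μ ℱ d lam i ω))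
      = fun ω => exp (∑ i ∈ Icc 1 n, selfNormalizedIncrement μ ℱ d lam i ω
        + (lam * d (n + 1) ω
          - lam ^ 2 / 2 * (d (n + 1) ω ^ 2 + μ[fun ω' => d (n + 1) ω' ^ 2 | ℱ n] ω))) := by
    funext ω
    rw [sum_Icc_succ_top (by omega)]
    rfl
  have hint_succ := hint (n + 1)
  rw [h_succ] at hint_succ ⊢
  exact condExp_exp_add_mul_sub_sq_add_condExp_le (ℱ.le n) (hS n).stronglyMeasurable
    (hL2 (n + 1)) (hmds n) lam hint_succ

end SelfNormalized

/-- Exponential inequality for self-normalized martingale difference sequences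
(discrete consequence of the Barlow–Jacka–Yor inequality). -/
theorem mds_self_normalized_exp_bound
    {Ω : Type*} {m0 : MeasurableSpace Ω} (μ : Measure Ω) [IsProbabilityMeasure μ]
    (ℱ : Filtration ℕ m0) (dseq : ℕ → Ω → ℝ)
    (hadp : Adapted ℱ dseq)
    (hL2 : ∀ i, MemLp (dseq i) 2 μ)
    (hmds : ∀ i : ℕ, 1 ≤ i → μ[dseq i | ℱ (i - 1)] =ᵐ[μ] 0)
    (n : ℕ) (lam : ℝ) :
    ∫ ω, Real.exp (lam * ∑ i ∈ Finset.Icc 1 n, dseq i ω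
        - lam ^ 2 / 2 * ((∑ i ∈ Finset.Icc 1 n, (dseq i ω) ^ 2)
          + ∑ i ∈ Finset.Icc 1 n, (μ[fun ω' => (dseq i ω') ^ 2 | ℱ (i - 1)]) ω)) ∂μ
      ≤ 1 := by
  have hZ := supermartingale_exp_sum_selfNormalizedIncrement hadp hL2
    (fun k => by simpa using hmds (k + 1) k.succ_pos) lam
  simp_rw [← sum_selfNormalizedIncrement]
  simpa using hZ.setIntegral_le n.zero_le MeasurableSet.univ
end
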